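/- Suppose there are at least two schools and let |S| > k > ℓ ≥ 1. Then the constrained Gale-Shapley mechanism GS^k is more fair by counting than GS^ℓ: (i) for every problem (P,≻,q), the number of blocking students for GS^ℓ(P,≻,q) under (P,≻,q) is at least the number of blocking students for GS^k(P,≻,q) under (P,≻,q); and (ii) there exists a problem where GS^ℓ(P,≻,q) has strictly more blocking students than GS^k(P,≻,q). -/

import Mathlib

/-!
School choice framework following Bonkoungou–Nesterov,
"Reforms meet fairness concerns in school and college admissions".

Students `I` and schools `S` are finite types with `|I| > |S|`.
A strict preference relation of a student over `S ∪ {∅}` is represented by a list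
of `Option S` containing every element exactly once (earlier = more preferred);
`none` is the outside option.  A strict priority order of a school is a list of
`I` containing every student exactly once (earlier = higher priority).
-/

namespace SchoolChoice

variable {I S : Type*} [Fintype I] [DecidableEq I] [Fintype S] [DecidableEq S]

/-- `p` is a strict preference relation on `S ∪ {∅}`: a ranking list containing every
element of `Option S` exactly once. -/
def ValidPref (p : List (Option S)) : Prop := p.Nodup ∧ ∀ x : Option S, x ∈ p

/-- `pr` is a strict priority order: a ranking list containing every student exactly once. -/
def ValidPrio (pr : List I) : Prop := pr.Nodup ∧ ∀ i : I, i ∈ pr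

/-- `a` is strictly preferred to `b` under the preference relation `p`. -/
def prefLt (p : List (Option S)) (a b : Option S) : Prop := p.idxOf a < p.idxOf b

/-- `i` has strictly higher priority than `j` under the priority order `pr`. -/
def prioLt (pr : List I) (i j : I) : Prop := pr.idxOf i < pr.idxOf j

instance (p : List (Option S)) (a b : Option S) : Decidable (prefLt p a b) :=
  inferInstanceAs (Decidable (_ < _))

instance (pr : List I) (i j : I) : Decidable (prioLt pr i j) :=
  inferInstanceAs (Decidable (_ < _))

/-- The acceptable schools of `p` (those preferred to the outside option), in preference
order. -/
def acceptables (p : List (Option S)) : List S := (p.takeWhile Option.isSome).filterMap id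

/-- The truncation of `p` after its `k`-th acceptable school: the preference relation
listing, in the same order, only the `min k _` most-preferred acceptable schools of `p`,
all other schools being unacceptable (kept below `none` in their original order). -/
def truncate (p : List (Option S)) (k : ℕ) : List (Option S) :=
  ((acceptables p).take k).map some ++
    none :: p.filter (fun x => decide (x ≠ none ∧ x ∉ ((acceptables p).take k).map some))

/-- `μ` is a matching: it respects the capacities `q`. -/
def IsMatching (q : S → ℕ) (μ : I → Option S) : Prop :=
  ∀ s : S, (Finset.univ.filter (fun i => μ i = some s)).card ≤ q s

/-- The pair `(i, s)` blocks `μ` under the problem `(P, prio, q)`. -/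
def Blocks (P : I → List (Option S)) (prio : S → List I) (q : S → ℕ)
    (μ : I → Option S) (i : I) (s : S) : Prop :=
  prefLt (P i) (some s) (μ i) ∧
    ((Finset.univ.filter (fun j => μ j = some s)).card < q s ∨
      ∃ j : I, μ j = some s ∧ prioLt (prio s) i j)

/-- `i` is a blocking student for `μ` under `(P, prio, q)`. -/
def BlockingStudent (P : I → List (Option S)) (prio : S → List I) (q : S → ℕ)
    (μ : I → Option S) (i : I) : Prop :=
  ∃ s : S, Blocks P prio q μ i s

/-- `μ` is individually rational under `P`. -/
def IndividuallyRational (P : I → List (Option S)) (μ : I → Option S) : Prop :=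
  ∀ i : I, ¬ prefLt (P i) none (μ i)

/-- `μ` is stable at `(P, prio, q)`. -/
def IsStable (P : I → List (Option S)) (prio : S → List I) (q : S → ℕ)
    (μ : I → Option S) : Prop :=
  IndividuallyRational P μ ∧ ∀ i : I, ¬ BlockingStudent P prio q μ i

/-- The number of blocking students for `μ` under `(P, prio, q)`. -/
noncomputable def numBlocking (P : I → List (Option S)) (prio : S → List I) (q : S → ℕ)
    (μ : I → Option S) : ℕ :=
  {i : I | BlockingStudent P prio q μ i}.ncard

/-! ### The Gale–Shapley student-proposing deferred acceptance mechanism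

The state `σ : I → ℕ` records, for each student, how many of her acceptable schools
have already rejected her; she currently applies to the `σ i`-th school on her list
(if any).  At each round every school tentatively keeps the `q s` highest-priority
students among its current applicants and rejects the rest, who move on. -/

/-- The school student `i` currently applies to. -/
def daTarget (P : I → List (Option S)) (σ : I → ℕ) (i : I) : Option S :=
  (acceptables (P i))[σ i]?

/-- The students tentatively held by school `s`: the `q s` highest-priority current
applicants. -/
def daHeld (P : I → List (Option S)) (prio : S → List I) (q : S → ℕ)
    (σ : I → ℕ) (s : S) : List I :=
  ((prio s).filter (fun i => decide (daTarget P σ i = some s))).take (q s)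

/-- One round of deferred acceptance: every rejected student moves to her next choice. -/
def daStep (P : I → List (Option S)) (prio : S → List I) (q : S → ℕ)
    (σ : I → ℕ) : I → ℕ := fun i =>
  match daTarget P σ i with
  | none => σ i
  | some s => if i ∈ daHeld P prio q σ s then σ i else σ i + 1

/-- The Gale–Shapley (student-proposing deferred acceptance) mechanism.  Iterating the
round map `|I| * |S| + 1` times is guaranteed to reach the terminal state. -/
def GS (P : I → List (Option S)) (prio : S → List I) (q : S → ℕ) : I → Option S :=
  fun i =>
    let σ := (daStep P prio q)^[Fintype.card I * Fintype.card S + 1] (fun _ => 0)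
    match daTarget P σ i with
    | none => none
    | some s => if i ∈ daHeld P prio q σ s then some s else none

/-- The constrained Gale–Shapley mechanism `GS^k`. -/
def GSk (k : ℕ) (P : I → List (Option S)) (prio : S → List I) (q : S → ℕ) : I → Option S :=
  GS (fun i => truncate (P i) k) prio q

/-! ### The Boston (immediate acceptance) mechanism -/

/-- Round `t` of the Boston mechanism: each not-yet-accepted student applies to her
`t`-th ranked acceptable school (0-indexed), and each school permanently accepts, up to
its remaining capacity, its highest-priority new applicants. -/
def bostonRound (P : I → List (Option S)) (prio : S → List I) (q : S → ℕ)
    (μ : I → Option S) (t : ℕ) : I → Option S := fun i =>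
  match μ i with
  | some s => some s
  | none =>
    match (acceptables (P i))[t]? with
    | none => none
    | some s =>
      if i ∈ ((prio s).filter
            (fun j => decide (μ j = none ∧ (acceptables (P j))[t]? = some s))).take
          (q s - (Finset.univ.filter (fun j => μ j = some s)).card)
      then some s else none

/-- The Boston (immediate acceptance) mechanism. -/
def Boston (P : I → List (Option S)) (prio : S → List I) (q : S → ℕ) : I → Option S :=
  (List.range (Fintype.card S)).foldl (bostonRound P prio q) (fun _ => none)

/-- The constrained Boston mechanism `β^k`. -/
def Bostonk (k : ℕ) (P : I → List (Option S)) (prio : S → List I) (q : S → ℕ) :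
    I → Option S :=
  Boston (fun i => truncate (P i) k) prio q

/-! ### The first-preference-first mechanism -/

/-- The adjusted priority profile: each first-preference-first school (member of `fpf`)
ranks students first by the rank they assign to it under `P` (counting the ranking of the
outside option as well), ties broken by the original priority; equal-preference schools
keep their original priority. -/
def fpfPrio (fpf : Finset S) (P : I → List (Option S)) (prio : S → List I) : S → List I :=
  fun s =>
    if s ∈ fpf then
      (List.range (Fintype.card S + 1)).flatMap
        (fun r => (prio s).filter (fun i => decide ((P i).idxOf (some s) = r)))
    else prio s

/-- The first-preference-first mechanism with set `fpf` of first-preference-first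
schools: Gale–Shapley run on the adjusted priorities. -/
def FPF (fpf : Finset S) (P : I → List (Option S)) (prio : S → List I) (q : S → ℕ) :
    I → Option S :=
  GS P (fpfPrio fpf P prio) q

/-- The constrained first-preference-first mechanism `FPF^k`. -/
def FPFk (fpf : Finset S) (k : ℕ) (P : I → List (Option S)) (prio : S → List I)
    (q : S → ℕ) : I → Option S :=
  FPF fpf (fun i => truncate (P i) k) prio q

/-! ### Manipulation and equilibrium notions -/

/-- Student `i` is a manipulating student of the mechanism `φ` (with priorities and
capacities fixed) at the true profile `P`. -/
def ManipulatingStudent (φ : (I → List (Option S)) → I → Option S)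
    (P : I → List (Option S)) (i : I) : Prop :=
  ∃ Q : List (Option S), ValidPref Q ∧
    prefLt (P i) (φ (Function.update P i Q) i) (φ P i)

/-- The mechanism `φ` is not manipulable at `P`. -/
def NotManipulable (φ : (I → List (Option S)) → I → Option S)
    (P : I → List (Option S)) : Prop :=
  ∀ i : I, ¬ ManipulatingStudent φ P i

/-- `P'` is a Nash equilibrium of the game `(φ, P)` in which the sophisticated students
are the members of `M` (who may misreport, and best respond) and all other (sincere)
students report truthfully. -/
def NashEq (φ : (I → List (Option S)) → I → Option S) (P : I → List (Option S))
    (M : Finset I) (P' : I → List (Option S)) : Prop :=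
  (∀ i, ValidPref (P' i)) ∧ (∀ i ∉ M, P' i = P i) ∧
    ∀ i ∈ M, ∀ Q : List (Option S), ValidPref Q →
      ¬ prefLt (P i) (φ (Function.update P' i Q) i) (φ P' i)

/-! ### Semi-sophisticated students -/

/-- Student `i` is guaranteed her first choice `s`: `s` is her most-preferred acceptable
school and `i` is among the `q s` highest-priority students at `s`. -/
def GuaranteedFirstChoice (P : I → List (Option S)) (prio : S → List I) (q : S → ℕ)
    (i : I) (s : S) : Prop :=
  (acceptables (P i)).head? = some s ∧ (prio s).idxOf i < q s

instance (P : I → List (Option S)) (prio : S → List I) (q : S → ℕ) (i : I) (s : S) :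
    Decidable (GuaranteedFirstChoice P prio q i s) :=
  inferInstanceAs (Decidable (_ ∧ _))

/-- School `s` is competitive: at least `q s` students are guaranteed their first
choice `s`. -/
def Competitive (P : I → List (Option S)) (prio : S → List I) (q : S → ℕ) (s : S) : Prop :=
  q s ≤ (Finset.univ.filter (fun i => GuaranteedFirstChoice P prio q i s)).card

instance (P : I → List (Option S)) (prio : S → List I) (q : S → ℕ) (s : S) :
    Decidable (Competitive P prio q s) :=
  inferInstanceAs (Decidable (_ ≤ _))

/-- `P'` is a Nash equilibrium of the game `(GS^ℓ, P)` with semi-sophisticated students: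
every student guaranteed her first choice reports truthfully; every other student reports
truthfully if she has at most `ℓ` acceptable schools or all her acceptable schools are
competitive, and otherwise lists as acceptable, in the order given by her true preference,
only her acceptable schools that are not competitive. -/
def SemiSophProfile (ℓ : ℕ) (P : I → List (Option S)) (prio : S → List I) (q : S → ℕ)
    (P' : I → List (Option S)) : Prop :=
  ∀ i : I,
    ((∃ s : S, GuaranteedFirstChoice P prio q i s) → P' i = P i) ∧
    (¬ (∃ s : S, GuaranteedFirstChoice P prio q i s) →
      (((acceptables (P i)).length ≤ ℓ ∨ ∀ s ∈ acceptables (P i), Competitive P prio q s) →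
          P' i = P i) ∧
      (¬ ((acceptables (P i)).length ≤ ℓ ∨
            ∀ s ∈ acceptables (P i), Competitive P prio q s) →
          acceptables (P' i) =
            (acceptables (P i)).filter (fun s => decide (¬ Competitive P prio q s))))


/-!
Write `μ = GS^k` and `ν = GS^ℓ`. Running deferred acceptance on the `ℓ`-truncated lists and then
resuming it on the `k`-truncated lists still ends at the student-optimal state of the
`k`-truncation, and while it runs a school only gains students and only trades them for better
ones. Hence every school holds at least as many students under `μ` as under `ν`, and a school that
`ν` fills with students above `i` is also filled by `μ` with students above `i`.

Since `μ` is stable for the `k`-truncation, a student who blocks `μ` under the true preferences is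
unmatched under `μ`, and then she also blocks `ν` unless `ν` matches her. So the students who block
`μ` but not `ν` are among those matched by `ν` but not by `μ`, and every student matched by `μ` but
not by `ν` blocks `ν` but not `μ`. As `μ` matches at least as many students as `ν`, it has at most
as many blocking students.

For strictness, let one student find every school acceptable and give a seat only to her
`(ℓ + 1)`-st choice: `GS^ℓ` leaves her unmatched and blocking, while `GS^k` gives her the seat and
then nobody blocks.
-/

open Finset

theorem _root_.Finset.card_le_card_of_sdiff_subset_sdiff {α : Type*} [DecidableEq α]
    {B B' N N' : Finset α} (hB : B \ B' ⊆ N' \ N) (hN : N \ N' ⊆ B' \ B)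
    (hcard : N'.card ≤ N.card) : B.card ≤ B'.card :=
  card_sdiff_le_card_sdiff_iff.mp <|
    calc (B \ B').card ≤ (N' \ N).card := card_le_card hB
      _ ≤ (N \ N').card := card_sdiff_le_card_sdiff_iff.mpr hcard
      _ ≤ (B' \ B).card := card_le_card hN

theorem _root_.Finset.card_filter_ne_none {ι α : Type*} [Fintype ι] [Fintype α] [DecidableEq α]
    (f : ι → Option α) : #{i | f i ≠ none} = ∑ a, #{i | f i = some a} := by
  rw [card_eq_sum_card_fiberwise (f := f) (t := univ.map Function.Embedding.some)
    fun i hi => by simpa [Option.ne_none_iff_exists, eq_comm] using hi, sum_map]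
  refine sum_congr rfl fun a _ => congrArg card ?_
  ext i
  simp +contextual

theorem _root_.Function.isFixedPt_iterate_of_le_apply {ι : Type*} [Fintype ι]
    {f : (ι → ℕ) → ι → ℕ} (hf : ∀ σ, σ ≤ f σ) {σ₀ : ι → ℕ} {B : ℕ}
    (hB : ∀ n, ∑ i, f^[n] σ₀ i ≤ B) : Function.IsFixedPt f (f^[B + 1] σ₀) := by
  by_contra hnot
  have hstuck : ∀ t ≤ B + 1, ¬ Function.IsFixedPt f (f^[t] σ₀) := fun t ht hfix => by
    refine hnot ?_
    rw [show B + 1 = (B + 1 - t) + t by omega, Function.iterate_add_apply,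
      Function.iterate_fixed hfix]
    exact hfix
  have hgrow : ∀ t ≤ B + 1, t ≤ ∑ i, f^[t] σ₀ i := by
    intro t
    induction t with
    | zero => simp
    | succ t ih =>
      intro ht
      have hlt : ∑ i, f^[t] σ₀ i < ∑ i, f^[t + 1] σ₀ i := by
        rw [Function.iterate_succ_apply']
        obtain ⟨i, hi⟩ := Function.ne_iff.mp (hstuck t (by omega))
        exact sum_lt_sum (fun j _ => hf _ j) ⟨i, mem_univ i, lt_of_le_of_ne (hf _ i) hi.symm⟩
      have := ih (by omega)
      omega
  have := hgrow (B + 1) le_rfl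
  have := hB (B + 1)
  omega

theorem _root_.List.idxOf_map_of_injective {α β : Type*} [BEq α] [LawfulBEq α] [BEq β] [LawfulBEq β]
    {f : α → β} (hf : Function.Injective f) (l : List α) (a : α) :
    (l.map f).idxOf (f a) = l.idxOf a := by
  induction l with
  | nil => rfl
  | cons b l ih => by_cases h : b = a <;> simp [hf.eq_iff, h, ih]

theorem _root_.List.Pairwise.take_of_le_length_filter {α : Type*} {f : α → ℕ} {c : ℕ} :
    ∀ {l : List α}, l.Pairwise (f · < f ·) → ∀ {n : ℕ},
      n ≤ (l.filter (f · < c)).length → (l.take n).length = n ∧ ∀ a ∈ l.take n, f a < c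
  | [], _, n, hn => by simp_all
  | _ :: _, _, 0, _ => by simp
  | x :: l, hl, n + 1, hn => by
    have hl' := List.pairwise_cons.mp hl
    by_cases hx : f x < c
    · rw [List.filter_cons_of_pos (by simpa using hx), List.length_cons] at hn
      obtain ⟨hlen, hlt⟩ := hl'.2.take_of_le_length_filter (Nat.le_of_succ_le_succ hn)
      refine ⟨by simp [hlen], fun a ha => ?_⟩
      rcases List.mem_cons.mp (by simpa using ha) with rfl | ha
      exacts [hx, hlt a ha]
    · have hnone : ∀ a ∈ l, ¬ f a < c := fun a ha => by
        simpa using (hl'.1 a ha).le.trans' (not_lt.mp hx)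
      rw [List.filter_cons_of_neg (by simpa using hx),
        List.filter_eq_nil_iff.mpr fun a ha => by simpa using hnone a ha] at hn
      simp at hn

section Preferences

variable {S : Type*} {p p' : List (Option S)} {s t : S}

theorem acceptables_map_some_append (L : List S) (r : List (Option S)) :
    acceptables (L.map some ++ none :: r) = L := by
  have htake : (L.map some ++ none :: r).takeWhile Option.isSome = L.map some := by
    induction L with
    | nil => simp
    | cons a L ih => simp [ih]
  simp [acceptables, htake, List.filterMap_map]

theorem ValidPref.eq_map_some_append (hp : ValidPref p) :
    ∃ r, p = (acceptables p).map some ++ none :: r := by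
  have hnone : none ∈ p.dropWhile Option.isSome := by
    have h := hp.2 none
    rw [← List.takeWhile_append_dropWhile (p := Option.isSome) (l := p), List.mem_append] at h
    exact h.resolve_left fun h' => by simpa using List.mem_takeWhile_imp h'
  have hne : p.dropWhile Option.isSome ≠ [] := List.ne_nil_of_mem hnone
  have hhead : (p.dropWhile Option.isSome).head hne = none := by
    simpa [Option.not_isSome_iff_eq_none] using List.head_dropWhile_not Option.isSome hne
  have htake : p.takeWhile Option.isSome = (acceptables p).map some := by
    rw [acceptables, List.map_filterMap_some_eq_filter_map_isSome, List.map_id_fun, id,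
      List.filter_eq_self.mpr fun x hx => List.mem_takeWhile_imp hx]
  refine ⟨(p.dropWhile Option.isSome).tail, ?_⟩
  conv_lhs => rw [← List.takeWhile_append_dropWhile (p := Option.isSome) (l := p)]
  rw [htake, ← hhead, List.cons_head_tail hne]

theorem ValidPref.nodup_acceptables (hp : ValidPref p) : (acceptables p).Nodup := by
  obtain ⟨r, hr⟩ := hp.eq_map_some_append
  have := hp.1
  rw [hr] at this
  exact this.of_append_left.of_map some

theorem validPref_map_some_append {L R : List S} (hnodup : (L ++ R).Nodup)
    (hmem : ∀ s, s ∈ L ++ R) : ValidPref (L.map some ++ none :: R.map some) := by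
  have hperm : (L.map some ++ none :: R.map some).Perm (none :: (L ++ R).map some) := by
    rw [List.map_append]
    exact List.perm_middle
  refine ⟨hperm.nodup_iff.mpr (List.nodup_cons.mpr ⟨by simp, hnodup.map (Option.some_injective S)⟩),
    fun x => hperm.mem_iff.mpr ?_⟩
  rcases x with _ | s
  · exact List.mem_cons_self
  · exact List.mem_cons_of_mem _ (List.mem_map_of_mem (hmem s))

variable [DecidableEq S]

theorem ValidPref.idxOf_none (hp : ValidPref p) : p.idxOf none = (acceptables p).length := by
  obtain ⟨r, hr⟩ := hp.eq_map_some_append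
  conv_lhs => rw [hr]
  rw [List.idxOf_append_of_notMem (by simp), List.idxOf_cons_self, List.length_map,
    Nat.add_zero]

theorem ValidPref.idxOf_some_of_mem (hp : ValidPref p) (hs : s ∈ acceptables p) :
    p.idxOf (some s) = (acceptables p).idxOf s := by
  obtain ⟨r, hr⟩ := hp.eq_map_some_append
  conv_lhs => rw [hr]
  rw [List.idxOf_append_of_mem (by simpa using hs)]
  exact List.idxOf_map_of_injective (Option.some_injective S) ..

theorem ValidPref.length_acceptables_lt_idxOf (hp : ValidPref p) (hs : s ∉ acceptables p) :
    (acceptables p).length < p.idxOf (some s) := by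
  obtain ⟨r, hr⟩ := hp.eq_map_some_append
  conv_rhs => rw [hr]
  rw [List.idxOf_append_of_notMem (by simpa using hs), List.idxOf_cons_ne _ (by simp)]
  simp

theorem ValidPref.prefLt_some_none_iff (hp : ValidPref p) :
    prefLt p (some s) none ↔ s ∈ acceptables p := by
  rw [prefLt, hp.idxOf_none]
  by_cases hs : s ∈ acceptables p
  · simpa [hp.idxOf_some_of_mem hs, hs] using List.idxOf_lt_length_iff.mpr hs
  · simpa [hs] using (hp.length_acceptables_lt_idxOf hs).le

theorem ValidPref.prefLt_none_some_iff (hp : ValidPref p) :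
    prefLt p none (some s) ↔ s ∉ acceptables p := by
  rw [prefLt, hp.idxOf_none]
  by_cases hs : s ∈ acceptables p
  · simpa [hp.idxOf_some_of_mem hs, hs] using (List.idxOf_lt_length_iff.mpr hs).le
  · simpa [hs] using hp.length_acceptables_lt_idxOf hs

theorem ValidPref.prefLt_some_some_iff (hp : ValidPref p) (ht : t ∈ acceptables p) :
    prefLt p (some s) (some t) ↔
      s ∈ acceptables p ∧ (acceptables p).idxOf s < (acceptables p).idxOf t := by
  rw [prefLt, hp.idxOf_some_of_mem ht]
  by_cases hs : s ∈ acceptables p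
  · simp [hp.idxOf_some_of_mem hs, hs]
  · have := List.idxOf_lt_length_iff.mpr ht
    have := hp.length_acceptables_lt_idxOf hs
    simp only [hs, false_and, iff_false, not_lt]
    omega

theorem ValidPref.prefLt_of_isPrefix (hp : ValidPref p) (hp' : ValidPref p')
    (hpre : acceptables p' <+: acceptables p) (ht : t ∈ acceptables p')
    (hst : prefLt p (some s) (some t)) : prefLt p' (some s) (some t) := by
  obtain ⟨B, hB⟩ := hpre
  have hidx : ∀ {u}, u ∈ acceptables p' → (acceptables p).idxOf u = (acceptables p').idxOf u :=
    fun hu => hB ▸ List.idxOf_append_of_mem hu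
  obtain ⟨hs, hlt⟩ := (hp.prefLt_some_some_iff (hB ▸ List.mem_append_left B ht)).mp hst
  have hs' : s ∈ acceptables p' := by
    by_contra hs'
    have := List.idxOf_lt_length_iff.mpr ht
    rw [hidx ht, ← hB, List.idxOf_append_of_notMem hs'] at hlt
    omega
  rw [hp'.prefLt_some_some_iff ht, ← hidx hs', ← hidx ht]
  exact ⟨hs', hlt⟩

theorem acceptables_truncate (p : List (Option S)) (k : ℕ) :
    acceptables (truncate p k) = (acceptables p).take k :=
  acceptables_map_some_append _ _

theorem ValidPref.truncate (hp : ValidPref p) (k : ℕ) : ValidPref (truncate p k) := by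
  set top := ((acceptables p).take k).map some
  refine ⟨List.nodup_append.mpr ⟨?_, ?_, ?_⟩, fun x => ?_⟩
  · exact ((List.take_sublist _ _).nodup hp.nodup_acceptables).map (Option.some_injective S)
  · exact List.nodup_cons.mpr ⟨by simp, hp.1.filter _⟩
  · rintro x hx y hy rfl
    rcases List.mem_cons.mp hy with rfl | hy
    · obtain ⟨s, -, hs⟩ := List.mem_map.mp hx
      exact Option.some_ne_none s hs
    · have := List.of_mem_filter hy
      simp only [decide_eq_true_eq] at this
      exact this.2 hx
  · by_cases hx : x ∈ top
    · exact List.mem_append_left _ hx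
    · rcases x with _ | s
      · exact List.mem_append_right _ List.mem_cons_self
      · exact List.mem_append_right _ <| List.mem_cons_of_mem _ <|
          List.mem_filter.mpr ⟨hp.2 _, by simpa only [decide_eq_true_eq] using ⟨by simp, hx⟩⟩

end Preferences

section Matchings

variable {I S : Type*} [DecidableEq S] {P P' : I → List (Option S)} {prio : S → List I}
  {q : S → ℕ} {μ : I → Option S} {i : I} {s : S}

-- `σ ≤ matchRank P μ` says that the run `σ` has moved no student past `μ i` on her list.
def matchRank (P : I → List (Option S)) (μ : I → Option S) (i : I) : ℕ :=
  match μ i with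
  | none => (acceptables (P i)).length
  | some s => (acceptables (P i)).idxOf s

theorem matchRank_of_eq_none (h : μ i = none) : matchRank P μ i = (acceptables (P i)).length := by
  simp [matchRank, h]

theorem matchRank_of_eq_some (h : μ i = some s) :
    matchRank P μ i = (acceptables (P i)).idxOf s := by
  simp [matchRank, h]

theorem IndividuallyRational.mem_acceptables (hval : ValidPref (P i))
    (hμ : IndividuallyRational P μ) (h : μ i = some s) : s ∈ acceptables (P i) := by
  have := hμ i
  rwa [h, hval.prefLt_none_some_iff, not_not] at this

theorem prefLt_iff_lt_matchRank (hval : ValidPref (P i)) (hμ : IndividuallyRational P μ) :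
    prefLt (P i) (some s) (μ i) ↔
      s ∈ acceptables (P i) ∧ (acceptables (P i)).idxOf s < matchRank P μ i := by
  rcases h : μ i with _ | t
  · rw [matchRank_of_eq_none h, hval.prefLt_some_none_iff, iff_self_and]
    exact List.idxOf_lt_length_iff.mpr
  · rw [matchRank_of_eq_some h, hval.prefLt_some_some_iff (hμ.mem_acceptables hval h)]

variable [Fintype I]

theorem IsMatching.pos_of_eq_some (hμ : IsMatching q μ) (h : μ i = some s) : 0 < q s :=
  (card_pos.mpr ⟨i, by simpa using h⟩).trans_le (hμ s)

variable [DecidableEq I]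

def IsFullAbove (prio : S → List I) (q : S → ℕ) (μ : I → Option S) (s : S) (i : I) : Prop :=
  #{j | μ j = some s} = q s ∧ ∀ j, μ j = some s → prioLt (prio s) j i

theorem blocks_iff (hprio : ValidPrio (prio s)) (hμ : IsMatching q μ) :
    Blocks P prio q μ i s ↔ prefLt (P i) (some s) (μ i) ∧ ¬ IsFullAbove prio q μ s i := by
  refine and_congr_right fun hpref => ⟨?_, fun hfull => ?_⟩
  · rintro (hlt | ⟨j, hj, hij⟩) ⟨hcard, hbelow⟩
    · omega
    · exact lt_asymm hij (hbelow j hj)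
  · have hne : μ i ≠ some s := fun h => lt_irrefl _ (h ▸ hpref : prefLt (P i) (some s) (some s))
    by_cases hcard : #{j | μ j = some s} = q s
    · obtain ⟨j, hj, hji⟩ : ∃ j, μ j = some s ∧ ¬ prioLt (prio s) j i := by
        by_contra! h
        exact hfull ⟨hcard, h⟩
      have hidx : (prio s).idxOf j ≠ (prio s).idxOf i :=
        (List.idxOf_inj (hprio.2 j)).not.mpr fun h => hne (h ▸ hj)
      exact Or.inr ⟨j, hj, lt_of_le_of_ne (not_lt.mp hji) hidx.symm⟩
    · exact Or.inl (lt_of_le_of_ne (hμ s) hcard)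

theorem blockingStudent_iff_of_eq_none (hval : ValidPref (P i))
    (hprio : ∀ s, ValidPrio (prio s)) (hμ : IsMatching q μ) (hi : μ i = none) :
    BlockingStudent P prio q μ i ↔ ∃ s ∈ acceptables (P i), ¬ IsFullAbove prio q μ s i := by
  simp only [BlockingStudent, blocks_iff (hprio _) hμ, hi, hval.prefLt_some_none_iff]

theorem IsMatching.not_blocks_of_eq_zero (hμ : IsMatching q μ) (hq : q s = 0) :
    ¬ Blocks P prio q μ i s := by
  rintro ⟨-, hlt | ⟨j, hj, -⟩⟩
  · omega
  · exact (hμ.pos_of_eq_some hj).ne' hq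

theorem IsStable.card_eq_of_eq_none (hval : ValidPref (P i)) (hμ : IsMatching q μ)
    (hst : IsStable P prio q μ) (hi : μ i = none) (hs : s ∈ acceptables (P i)) :
    #{j | μ j = some s} = q s := by
  refine (hμ s).antisymm (not_lt.mp fun hlt => hst.2 i ⟨s, ?_, Or.inl hlt⟩)
  rwa [hi, hval.prefLt_some_none_iff]

theorem numBlocking_eq_card [DecidablePred (BlockingStudent P prio q μ)] :
    numBlocking P prio q μ = #{i | BlockingStudent P prio q μ i} := by
  rw [numBlocking, ← Set.ncard_coe_finset]
  simp

theorem numBlocking_eq_zero_iff :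
    numBlocking P prio q μ = 0 ↔ ∀ i, ¬ BlockingStudent P prio q μ i := by
  rw [numBlocking, Set.ncard_eq_zero (Set.toFinite _), Set.eq_empty_iff_forall_notMem]
  rfl

theorem numBlocking_pos_iff : 0 < numBlocking P prio q μ ↔ ∃ i, BlockingStudent P prio q μ i :=
  Set.ncard_pos (Set.toFinite _)

theorem eq_none_of_blockingStudent_of_isPrefix (hval : ValidPref (P i))
    (hval' : ValidPref (P' i)) (hpre : acceptables (P' i) <+: acceptables (P i))
    (hst : IsStable P' prio q μ) (h : BlockingStudent P prio q μ i) : μ i = none := by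
  obtain ⟨s, hpref, hroom⟩ := h
  rcases hμi : μ i with _ | t
  · rfl
  rw [hμi] at hpref
  have ht := hst.1.mem_acceptables hval' hμi
  refine (hst.2 i ⟨s, ?_, hroom⟩).elim
  rw [hμi]
  exact hval.prefLt_of_isPrefix hval' hpre ht hpref

end Matchings

section DeferredAcceptance

variable {I S : Type*} {P P' : I → List (Option S)} {prio : S → List I}
  {q : S → ℕ} {σ σ' : I → ℕ} {i : I} {s : S}

theorem daTarget_eq_none_iff : daTarget P σ i = none ↔ (acceptables (P i)).length ≤ σ i :=
  List.getElem?_eq_none_iff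

theorem daTarget_eq_some_iff : daTarget P σ i = some s ↔
    ∃ h : σ i < (acceptables (P i)).length, (acceptables (P i))[σ i] = s :=
  List.getElem?_eq_some_iff

theorem daTarget_eq_of_isPrefix (hpre : acceptables (P i) <+: acceptables (P' i))
    (h : daTarget P σ i = some s) : daTarget P' σ i = some s := by
  obtain ⟨B, hB⟩ := hpre
  obtain ⟨hlt, -⟩ := daTarget_eq_some_iff.mp h
  rw [daTarget, ← hB, List.getElem?_append_left hlt]
  exact h

variable [DecidableEq S]

def daApplicants (P : I → List (Option S)) (prio : S → List I) (σ : I → ℕ) (s : S) : List I :=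
  (prio s).filter fun i => decide (daTarget P σ i = some s)

theorem mem_daApplicants : i ∈ daApplicants P prio σ s ↔ i ∈ prio s ∧ daTarget P σ i = some s := by
  simp [daApplicants]

theorem daHeld_eq_take : daHeld P prio q σ s = (daApplicants P prio σ s).take (q s) := rfl

theorem daHeld_subset_daApplicants : daHeld P prio q σ s ⊆ daApplicants P prio σ s :=
  List.take_subset _ _

theorem nodup_daHeld (h : (prio s).Nodup) : (daHeld P prio q σ s).Nodup :=
  ((List.take_sublist _ _).trans List.filter_sublist).nodup h

theorem length_daHeld_le : (daHeld P prio q σ s).length ≤ q s :=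
  (List.length_take_le _ _)

theorem idxOf_eq_of_daTarget_eq (hnodup : (acceptables (P i)).Nodup)
    (h : daTarget P σ i = some s) :
    s ∈ acceptables (P i) ∧ (acceptables (P i)).idxOf s = σ i := by
  obtain ⟨hlt, rfl⟩ := daTarget_eq_some_iff.mp h
  exact ⟨List.getElem_mem _, hnodup.idxOf_getElem _ hlt⟩

theorem daApplicants_subset_of_isPrefix (hpre : ∀ i, acceptables (P i) <+: acceptables (P' i)) :
    daApplicants P prio σ s ⊆ daApplicants P' prio σ s := fun _ hj =>
  have hj := mem_daApplicants.mp hj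
  mem_daApplicants.mpr ⟨hj.1, daTarget_eq_of_isPrefix (hpre _) hj.2⟩

theorem length_daHeld_le_of_subset (hprio : (prio s).Nodup)
    (hsub : daHeld P prio q σ s ⊆ daApplicants P' prio σ' s) :
    (daHeld P prio q σ s).length ≤ (daHeld P' prio q σ' s).length := by
  rw [daHeld_eq_take (σ := σ'), List.length_take]
  exact le_min length_daHeld_le ((nodup_daHeld hprio).subperm hsub).length_le

variable [DecidableEq I]

theorem pairwise_daApplicants (hprio : (prio s).Nodup) :
    (daApplicants P prio σ s).Pairwise (prioLt (prio s)) :=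
  (List.pairwise_iff_getElem.mpr fun a b ha hb hab => by
    simpa [prioLt, hprio.idxOf_getElem] using hab).sublist List.filter_sublist

theorem daStep_of_daTarget_eq_none (h : daTarget P σ i = none) : daStep P prio q σ i = σ i := by
  simp [daStep, h]

theorem daStep_of_mem_daHeld (h : daTarget P σ i = some s) (hi : i ∈ daHeld P prio q σ s) :
    daStep P prio q σ i = σ i := by
  simp [daStep, h, hi]

theorem daStep_of_not_mem_daHeld (h : daTarget P σ i = some s) (hi : i ∉ daHeld P prio q σ s) :
    daStep P prio q σ i = σ i + 1 := by
  simp [daStep, h, hi]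

theorem le_daStep (σ : I → ℕ) : σ ≤ daStep P prio q σ := fun i => by
  rcases ht : daTarget P σ i with _ | s
  · rw [daStep_of_daTarget_eq_none ht]
  · by_cases hi : i ∈ daHeld P prio q σ s
    · rw [daStep_of_mem_daHeld ht hi]
    · rw [daStep_of_not_mem_daHeld ht hi]
      exact Nat.le_succ _

theorem daStep_le_length (hσ : σ i ≤ (acceptables (P i)).length) :
    daStep P prio q σ i ≤ (acceptables (P i)).length := by
  rcases ht : daTarget P σ i with _ | s
  · rwa [daStep_of_daTarget_eq_none ht]
  · obtain ⟨hlt, -⟩ := daTarget_eq_some_iff.mp ht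
    by_cases hi : i ∈ daHeld P prio q σ s
    · rwa [daStep_of_mem_daHeld ht hi]
    · rw [daStep_of_not_mem_daHeld ht hi]
      omega

theorem iterate_daStep_le_length (hσ : ∀ i, σ i ≤ (acceptables (P i)).length) (n : ℕ) :
    ∀ i, (daStep P prio q)^[n] σ i ≤ (acceptables (P i)).length :=
  Function.Iterate.rec _ hσ (fun _ h i => daStep_le_length (h i)) n

theorem daHeld_subset_daApplicants_daStep :
    daHeld P prio q σ s ⊆ daApplicants P prio (daStep P prio q σ) s := fun j hj => by
  obtain ⟨hjprio, hjt⟩ := mem_daApplicants.mp (daHeld_subset_daApplicants hj)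
  refine mem_daApplicants.mpr ⟨hjprio, ?_⟩
  rwa [daTarget, daStep_of_mem_daHeld hjt hj]

theorem length_daHeld_le_iterate (hprio : (prio s).Nodup) (n : ℕ) :
    (daHeld P prio q σ s).length ≤ (daHeld P prio q ((daStep P prio q)^[n] σ) s).length :=
  Function.Iterate.rec (fun σ' => (daHeld P prio q σ s).length ≤ (daHeld P prio q σ' s).length)
    le_rfl (fun _ h => h.trans (length_daHeld_le_of_subset hprio daHeld_subset_daApplicants_daStep))
    n

def HeldAbove (P : I → List (Option S)) (prio : S → List I) (q : S → ℕ) (σ : I → ℕ) (s : S)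
    (i : I) : Prop :=
  (daHeld P prio q σ s).length = q s ∧ ∀ j ∈ daHeld P prio q σ s, prioLt (prio s) j i

theorem heldAbove_of_not_mem_daHeld (hprio : ValidPrio (prio s)) (ht : daTarget P σ i = some s)
    (hi : i ∉ daHeld P prio q σ s) : HeldAbove P prio q σ s i := by
  have happ : i ∈ daApplicants P prio σ s := mem_daApplicants.mpr ⟨hprio.2 i, ht⟩
  rw [← List.take_append_drop (q s) (daApplicants P prio σ s)] at happ
  have hdrop : i ∈ (daApplicants P prio σ s).drop (q s) :=
    (List.mem_append.mp happ).resolve_left hi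
  have hsorted := pairwise_daApplicants (P := P) (σ := σ) hprio.1
  refine ⟨?_, fun j hj => ?_⟩
  · have := List.length_pos_of_mem hdrop
    rw [daHeld_eq_take, List.length_take, List.length_drop] at *
    omega
  · rw [← List.take_append_drop (q s) (daApplicants P prio σ s)] at hsorted
    exact List.pairwise_append.mp hsorted |>.2.2 j hj i hdrop

theorem HeldAbove.of_subset_daApplicants (hprio : (prio s).Nodup)
    (hsub : daHeld P prio q σ s ⊆ daApplicants P' prio σ' s) (h : HeldAbove P prio q σ s i) :
    HeldAbove P' prio q σ' s i := by
  have hmany : q s ≤ ((daApplicants P' prio σ' s).filter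
      ((prio s).idxOf · < (prio s).idxOf i)).length := by
    rw [← h.1]
    refine ((nodup_daHeld hprio).subperm fun j hj => ?_).length_le
    exact List.mem_filter.mpr ⟨hsub hj, by simpa [prioLt] using h.2 j hj⟩
  exact (pairwise_daApplicants hprio).take_of_le_length_filter hmany

theorem HeldAbove.of_isPrefix (hprio : (prio s).Nodup)
    (hpre : ∀ i, acceptables (P i) <+: acceptables (P' i)) (h : HeldAbove P prio q σ s i) :
    HeldAbove P' prio q σ s i :=
  h.of_subset_daApplicants hprio fun _ hj =>
    daApplicants_subset_of_isPrefix hpre (daHeld_subset_daApplicants hj)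

theorem HeldAbove.iterate (hprio : (prio s).Nodup) (h : HeldAbove P prio q σ s i) (n : ℕ) :
    HeldAbove P prio q ((daStep P prio q)^[n] σ) s i :=
  Function.Iterate.rec (HeldAbove P prio q · s i) h
    (fun _ h => h.of_subset_daApplicants hprio daHeld_subset_daApplicants_daStep) n

def RejectionsJustified (P : I → List (Option S)) (prio : S → List I) (q : S → ℕ)
    (σ : I → ℕ) : Prop :=
  ∀ i, ∀ s ∈ acceptables (P i), (acceptables (P i)).idxOf s < σ i → HeldAbove P prio q σ s i

theorem rejectionsJustified_zero : RejectionsJustified P prio q 0 :=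
  fun _ _ _ h => absurd h (Nat.not_lt_zero _)

theorem RejectionsJustified.step (hprio : ∀ s, ValidPrio (prio s))
    (h : RejectionsJustified P prio q σ) : RejectionsJustified P prio q (daStep P prio q σ) := by
  intro i s hs hlt
  have hstep : HeldAbove P prio q σ s i → HeldAbove P prio q (daStep P prio q σ) s i :=
    HeldAbove.of_subset_daApplicants (hprio s).1 daHeld_subset_daApplicants_daStep
  rcases ht : daTarget P σ i with _ | t
  · rw [daStep_of_daTarget_eq_none ht] at hlt
    exact hstep (h i s hs hlt)
  by_cases hi : i ∈ daHeld P prio q σ t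
  · rw [daStep_of_mem_daHeld ht hi] at hlt
    exact hstep (h i s hs hlt)
  rw [daStep_of_not_mem_daHeld ht hi] at hlt
  rcases Nat.lt_succ_iff_lt_or_eq.mp hlt with hlt | heq
  · exact hstep (h i s hs hlt)
  · obtain rfl : t = s := by
      rw [← Option.some_inj, ← ht, daTarget, ← heq, List.getElem?_idxOf hs]
    exact hstep (heldAbove_of_not_mem_daHeld (hprio t) ht hi)

theorem RejectionsJustified.iterate (hprio : ∀ s, ValidPrio (prio s))
    (h : RejectionsJustified P prio q σ) (n : ℕ) :
    RejectionsJustified P prio q ((daStep P prio q)^[n] σ) :=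
  Function.Iterate.rec _ h (fun _ h => h.step hprio) n

theorem RejectionsJustified.of_isPrefix (hprio : ∀ s, ValidPrio (prio s))
    (hpre : ∀ i, acceptables (P i) <+: acceptables (P' i))
    (hσ : ∀ i, σ i ≤ (acceptables (P i)).length) (h : RejectionsJustified P prio q σ) :
    RejectionsJustified P' prio q σ := by
  intro i s hs hlt
  obtain ⟨B, hB⟩ := hpre i
  have hsP : s ∈ acceptables (P i) := by
    by_contra hsP
    rw [← hB, List.idxOf_append_of_notMem hsP] at hlt
    have := hσ i
    omega
  rw [← hB, List.idxOf_append_of_mem hsP] at hlt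
  exact (h i s hsP hlt).of_isPrefix (hprio s).1 hpre

end DeferredAcceptance

section FinalStates

variable {I S : Type*} [DecidableEq I] [DecidableEq S] {P : I → List (Option S)}
  {prio : S → List I} {q : S → ℕ} {σ : I → ℕ} {i : I} {s : S}

def daMatch (P : I → List (Option S)) (prio : S → List I) (q : S → ℕ) (σ : I → ℕ) :
    I → Option S := fun i =>
  match daTarget P σ i with
  | none => none
  | some s => if i ∈ daHeld P prio q σ s then some s else none

structure IsFinalState (P : I → List (Option S)) (prio : S → List I) (q : S → ℕ)
    (σ : I → ℕ) : Prop where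
  isFixedPt : Function.IsFixedPt (daStep P prio q) σ
  le_length : ∀ i, σ i ≤ (acceptables (P i)).length
  justified : RejectionsJustified P prio q σ

namespace IsFinalState

variable (hσ : IsFinalState P prio q σ)
include hσ

theorem mem_daHeld (ht : daTarget P σ i = some s) : i ∈ daHeld P prio q σ s := by
  by_contra hi
  have := daStep_of_not_mem_daHeld ht hi
  rw [congrFun hσ.isFixedPt i] at this
  omega

theorem daMatch_eq_some_iff : daMatch P prio q σ i = some s ↔ daTarget P σ i = some s := by
  unfold daMatch
  rcases ht : daTarget P σ i with _ | t
  · simp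
  · simp [hσ.mem_daHeld ht]

theorem mem_daHeld_iff : i ∈ daHeld P prio q σ s ↔ daMatch P prio q σ i = some s := by
  rw [hσ.daMatch_eq_some_iff]
  exact ⟨fun h => (mem_daApplicants.mp (daHeld_subset_daApplicants h)).2, hσ.mem_daHeld⟩

theorem daMatch_eq_none_iff : daMatch P prio q σ i = none ↔ σ i = (acceptables (P i)).length := by
  have htarget : daTarget P σ i = none ↔ σ i = (acceptables (P i)).length :=
    daTarget_eq_none_iff.trans ⟨(hσ.le_length i).antisymm, Eq.ge⟩
  rw [← htarget]
  unfold daMatch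
  rcases ht : daTarget P σ i with _ | t
  · simp
  · simp [hσ.mem_daHeld ht]

theorem matchRank_daMatch (hval : ∀ i, ValidPref (P i)) :
    matchRank P (daMatch P prio q σ) = σ := funext fun i => by
  rcases h : daMatch P prio q σ i with _ | s
  · rw [matchRank_of_eq_none h, hσ.daMatch_eq_none_iff.mp h]
  · rw [matchRank_of_eq_some h]
    exact (idxOf_eq_of_daTarget_eq (hval i).nodup_acceptables (hσ.daMatch_eq_some_iff.mp h)).2

theorem individuallyRational (hval : ∀ i, ValidPref (P i)) :
    IndividuallyRational P (daMatch P prio q σ) := fun i => by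
  rcases h : daMatch P prio q σ i with _ | s
  · exact lt_irrefl _
  · rw [(hval i).prefLt_none_some_iff, not_not]
    exact (idxOf_eq_of_daTarget_eq (hval i).nodup_acceptables (hσ.daMatch_eq_some_iff.mp h)).1

variable [Fintype I]

theorem card_daMatch (hprio : (prio s).Nodup) :
    #{j | daMatch P prio q σ j = some s} = (daHeld P prio q σ s).length := by
  rw [← List.toFinset_card_of_nodup (nodup_daHeld hprio)]
  congr 1
  ext j
  simp [hσ.mem_daHeld_iff]

theorem isMatching (hprio : ∀ s, ValidPrio (prio s)) : IsMatching q (daMatch P prio q σ) :=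
  fun s => (hσ.card_daMatch (hprio s).1).trans_le length_daHeld_le

theorem heldAbove_iff (hprio : (prio s).Nodup) {i : I} :
    HeldAbove P prio q σ s i ↔ IsFullAbove prio q (daMatch P prio q σ) s i := by
  simp only [HeldAbove, IsFullAbove, hσ.card_daMatch hprio, hσ.mem_daHeld_iff]

theorem isStable (hval : ∀ i, ValidPref (P i)) (hprio : ∀ s, ValidPrio (prio s)) :
    IsStable P prio q (daMatch P prio q σ) := by
  refine ⟨hσ.individuallyRational hval, fun i ⟨s, hblock⟩ => ?_⟩
  obtain ⟨hpref, hfull⟩ := (blocks_iff (hprio s) (hσ.isMatching hprio)).mp hblock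
  obtain ⟨hs, hlt⟩ := (prefLt_iff_lt_matchRank (hval i) (hσ.individuallyRational hval)).mp hpref
  rw [hσ.matchRank_daMatch hval] at hlt
  exact hfull ((hσ.heldAbove_iff (hprio s).1).mp (hσ.justified i s hs hlt))

end IsFinalState

end FinalStates

section Termination

variable {I S : Type*} [Fintype I] [DecidableEq I] [Fintype S] [DecidableEq S]
  {P : I → List (Option S)} {prio : S → List I} {q : S → ℕ} {σ : I → ℕ}

theorem isFinalState_iterate (hval : ∀ i, ValidPref (P i)) (hprio : ∀ s, ValidPrio (prio s))
    (hσ : ∀ i, σ i ≤ (acceptables (P i)).length) (hjust : RejectionsJustified P prio q σ) :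
    IsFinalState P prio q ((daStep P prio q)^[Fintype.card I * Fintype.card S + 1] σ) where
  isFixedPt := Function.isFixedPt_iterate_of_le_apply le_daStep fun n =>
    calc ∑ i, (daStep P prio q)^[n] σ i ≤ ∑ _i : I, Fintype.card S :=
          sum_le_sum fun i _ =>
            (iterate_daStep_le_length hσ n i).trans (hval i).nodup_acceptables.length_le_card
      _ = Fintype.card I * Fintype.card S := by simp
  le_length := iterate_daStep_le_length hσ _
  justified := hjust.iterate hprio _

def daTerminal (P : I → List (Option S)) (prio : S → List I) (q : S → ℕ) : I → ℕ :=
  (daStep P prio q)^[Fintype.card I * Fintype.card S + 1] 0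

theorem GS_eq_daMatch_daTerminal : GS P prio q = daMatch P prio q (daTerminal P prio q) := rfl

theorem isFinalState_daTerminal (hval : ∀ i, ValidPref (P i)) (hprio : ∀ s, ValidPrio (prio s)) :
    IsFinalState P prio q (daTerminal P prio q) :=
  isFinalState_iterate hval hprio (fun _ => Nat.zero_le _) rejectionsJustified_zero

theorem GS_isMatching (hval : ∀ i, ValidPref (P i)) (hprio : ∀ s, ValidPrio (prio s)) :
    IsMatching q (GS P prio q) :=
  (isFinalState_daTerminal hval hprio).isMatching hprio

theorem GS_isStable (hval : ∀ i, ValidPref (P i)) (hprio : ∀ s, ValidPrio (prio s)) :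
    IsStable P prio q (GS P prio q) :=
  (isFinalState_daTerminal hval hprio).isStable hval hprio

end Termination

section StudentOptimality

variable {I S : Type*} [DecidableEq S] {P P' : I → List (Option S)} {prio : S → List I}
  {q : S → ℕ} {μ : I → Option S} {σ : I → ℕ} {i : I} {t : S}

theorem eq_some_of_daTarget_of_eq_matchRank (hval : ValidPref (P i))
    (hpre : acceptables (P' i) <+: acceptables (P i))
    (ht : daTarget P' σ i = some t) (heq : σ i = matchRank P μ i) : μ i = some t := by
  obtain ⟨htmem, hidx⟩ := idxOf_eq_of_daTarget_eq hval.nodup_acceptables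
    (daTarget_eq_of_isPrefix hpre ht)
  rcases hμi : μ i with _ | u
  · rw [matchRank_of_eq_none hμi, ← hidx] at heq
    exact absurd (List.idxOf_lt_length_iff.mpr htmem) heq.not_lt
  · rw [matchRank_of_eq_some hμi, ← hidx, List.idxOf_inj htmem] at heq
    rw [heq]

theorem prefLt_of_daTarget_of_le_matchRank (hval : ValidPref (P i))
    (hIR : IndividuallyRational P μ) (hpre : acceptables (P' i) <+: acceptables (P i))
    (ht : daTarget P' σ i = some t) (hle : σ i ≤ matchRank P μ i) (hne : μ i ≠ some t) :
    prefLt (P i) (some t) (μ i) := by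
  obtain ⟨htmem, hidx⟩ := idxOf_eq_of_daTarget_eq hval.nodup_acceptables
    (daTarget_eq_of_isPrefix hpre ht)
  refine (prefLt_iff_lt_matchRank hval hIR).mpr ⟨htmem, hidx ▸ lt_of_le_of_ne hle fun heq => ?_⟩
  exact hne (eq_some_of_daTarget_of_eq_matchRank hval hpre ht heq)

variable [Fintype I] [DecidableEq I]

theorem exists_mem_daHeld_ne (hprio : (prio t).Nodup) (hμ : IsMatching q μ)
    (hfull : (daHeld P' prio q σ t).length = q t) (hi : i ∉ daHeld P' prio q σ t)
    (hμi : μ i = some t) : ∃ j ∈ daHeld P' prio q σ t, μ j ≠ some t := by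
  by_contra! hall
  have hsub : insert i (daHeld P' prio q σ t).toFinset ⊆ ({j | μ j = some t} : Finset I) := by
    intro j hj
    rcases mem_insert.mp hj with rfl | hj
    exacts [by simpa using hμi, by simpa using hall j (List.mem_toFinset.mp hj)]
  have := (card_le_card hsub).trans (hμ t)
  rw [card_insert_of_notMem (by simpa using hi), List.toFinset_card_of_nodup
    (nodup_daHeld hprio), hfull] at this
  omega

variable (hval : ∀ i, ValidPref (P i)) (hprio : ∀ s, ValidPrio (prio s))
  (hpre : ∀ i, acceptables (P' i) <+: acceptables (P i)) (hμ : IsMatching q μ)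
  (hst : IsStable P prio q μ)
include hval hprio hpre hμ hst

theorem daStep_le_matchRank (hσ : σ ≤ matchRank P μ) :
    daStep P' prio q σ ≤ matchRank P μ := fun i => by
  rcases ht : daTarget P' σ i with _ | t
  · rw [daStep_of_daTarget_eq_none ht]
    exact hσ i
  by_cases hi : i ∈ daHeld P' prio q σ t
  · rw [daStep_of_mem_daHeld ht hi]
    exact hσ i
  rw [daStep_of_not_mem_daHeld ht hi]
  refine Nat.succ_le_of_lt (lt_of_le_of_ne (hσ i) fun heq => ?_)
  have hμi := eq_some_of_daTarget_of_eq_matchRank (hval i) (hpre i) ht heq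
  have habove := heldAbove_of_not_mem_daHeld (hprio t) ht hi
  obtain ⟨j, hj, hμj⟩ := exists_mem_daHeld_ne (hprio t).1 hμ habove.1 hi hμi
  have hjt := (mem_daApplicants.mp (daHeld_subset_daApplicants hj)).2
  exact hst.2 j ⟨t, prefLt_of_daTarget_of_le_matchRank (hval j) hst.1 (hpre j) hjt (hσ j) hμj,
    Or.inr ⟨i, hμi, habove.2 j hj⟩⟩

theorem iterate_daStep_le_matchRank (hσ : σ ≤ matchRank P μ) (n : ℕ) :
    (daStep P' prio q)^[n] σ ≤ matchRank P μ :=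
  Function.Iterate.rec (· ≤ matchRank P μ) hσ
    (fun _ => daStep_le_matchRank hval hprio hpre hμ hst) n

theorem daTerminal_le_matchRank [Fintype S] : daTerminal P' prio q ≤ matchRank P μ :=
  iterate_daStep_le_matchRank hval hprio hpre hμ hst (fun _ => Nat.zero_le _) _

end StudentOptimality

section LongerLists

variable {I S : Type*} [Fintype I] [DecidableEq I] [Fintype S] [DecidableEq S]
  {P P' : I → List (Option S)} {prio : S → List I} {q : S → ℕ} {σ : I → ℕ} {i : I} {s : S}

theorem IsFinalState.eq_daTerminal (hval : ∀ i, ValidPref (P i))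
    (hprio : ∀ s, ValidPrio (prio s)) (hσ : IsFinalState P prio q σ)
    (hle : σ ≤ daTerminal P prio q) : σ = daTerminal P prio q := by
  refine le_antisymm hle fun i => ?_
  have := daTerminal_le_matchRank hval hprio (fun i => List.prefix_refl _) (hσ.isMatching hprio)
    (hσ.isStable hval hprio) i
  rwa [hσ.matchRank_daMatch hval] at this

variable (hval' : ∀ i, ValidPref (P' i)) (hval : ∀ i, ValidPref (P i))
  (hprio : ∀ s, ValidPrio (prio s)) (hpre : ∀ i, acceptables (P' i) <+: acceptables (P i))
include hval' hval hprio hpre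

theorem isFinalState_iterate_daTerminal_of_isPrefix :
    IsFinalState P prio q
      ((daStep P prio q)^[Fintype.card I * Fintype.card S + 1] (daTerminal P' prio q)) :=
  have hσ' := isFinalState_daTerminal hval' hprio (q := q)
  isFinalState_iterate hval hprio (fun i => (hσ'.le_length i).trans (hpre i).length_le)
    (hσ'.justified.of_isPrefix hprio hpre hσ'.le_length)

theorem GS_eq_daMatch_iterate_daTerminal_of_isPrefix :
    GS P prio q = daMatch P prio q
      ((daStep P prio q)^[Fintype.card I * Fintype.card S + 1] (daTerminal P' prio q)) := by
  have hfin := isFinalState_iterate_daTerminal_of_isPrefix hval' hval hprio hpre (q := q)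
  have hμ := GS_isMatching hval hprio (q := q)
  have hst := GS_isStable hval hprio (q := q)
  have hle := iterate_daStep_le_matchRank hval hprio (fun i => List.prefix_refl _) hμ hst
    (daTerminal_le_matchRank hval hprio hpre hμ hst) (Fintype.card I * Fintype.card S + 1)
  rw [GS_eq_daMatch_daTerminal, (isFinalState_daTerminal hval hprio).matchRank_daMatch hval] at hle
  rw [GS_eq_daMatch_daTerminal, ← hfin.eq_daTerminal hval hprio hle]

theorem card_GS_le_of_isPrefix :
    #{j | GS P' prio q j = some s} ≤ #{j | GS P prio q j = some s} := by
  have hσ' := isFinalState_daTerminal hval' hprio (q := q)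
  rw [GS_eq_daMatch_daTerminal, hσ'.card_daMatch (hprio s).1,
    GS_eq_daMatch_iterate_daTerminal_of_isPrefix hval' hval hprio hpre,
    (isFinalState_iterate_daTerminal_of_isPrefix hval' hval hprio hpre).card_daMatch (hprio s).1]
  exact (length_daHeld_le_of_subset (hprio s).1 fun _ hj =>
    daApplicants_subset_of_isPrefix hpre (daHeld_subset_daApplicants hj)).trans
      (length_daHeld_le_iterate (hprio s).1 _)

theorem IsFullAbove.GS_of_isPrefix (h : IsFullAbove prio q (GS P' prio q) s i) :
    IsFullAbove prio q (GS P prio q) s i := by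
  have hσ' := isFinalState_daTerminal hval' hprio (q := q)
  rw [GS_eq_daMatch_daTerminal, ← hσ'.heldAbove_iff (hprio s).1] at h
  rw [GS_eq_daMatch_iterate_daTerminal_of_isPrefix hval' hval hprio hpre,
    ← (isFinalState_iterate_daTerminal_of_isPrefix hval' hval hprio hpre).heldAbove_iff
      (hprio s).1]
  exact (h.of_isPrefix (hprio s).1 hpre).iterate (hprio s).1 _

end LongerLists

section Fairness

variable {I S : Type*} [Fintype I] [DecidableEq I] [Fintype S] [DecidableEq S]
  {P Pk Pl : I → List (Option S)} {prio : S → List I} {q : S → ℕ}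

theorem numBlocking_GS_le_of_isPrefix (hval : ∀ i, ValidPref (P i))
    (hvalk : ∀ i, ValidPref (Pk i)) (hvall : ∀ i, ValidPref (Pl i))
    (hprio : ∀ s, ValidPrio (prio s)) (hk : ∀ i, acceptables (Pk i) <+: acceptables (P i))
    (hlk : ∀ i, acceptables (Pl i) <+: acceptables (Pk i)) :
    numBlocking P prio q (GS Pk prio q) ≤ numBlocking P prio q (GS Pl prio q) := by
  classical
  set μ := GS Pk prio q
  set ν := GS Pl prio q
  have hμ : IsMatching q μ := GS_isMatching hvalk hprio
  have hν : IsMatching q ν := GS_isMatching hvall hprio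
  have hunmatched : ∀ i, BlockingStudent P prio q μ i → μ i = none := fun i =>
    eq_none_of_blockingStudent_of_isPrefix (hval i) (hvalk i) (hk i) (GS_isStable hvalk hprio)
  have hfull : ∀ s i, IsFullAbove prio q ν s i → IsFullAbove prio q μ s i := fun _ _ =>
    IsFullAbove.GS_of_isPrefix hvall hvalk hprio hlk
  rw [numBlocking_eq_card, numBlocking_eq_card]
  refine card_le_card_of_sdiff_subset_sdiff (N := {i | μ i ≠ none}) (N' := {i | ν i ≠ none})
    (fun i hi => ?_) (fun i hi => ?_) ?_
  · simp only [mem_sdiff, mem_filter, mem_univ, true_and, not_not] at hi ⊢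
    have hμi := hunmatched i hi.1
    refine ⟨fun hνi => hi.2 ?_, hμi⟩
    obtain ⟨s, hs, hnot⟩ := (blockingStudent_iff_of_eq_none (hval i) hprio hμ hμi).mp hi.1
    exact (blockingStudent_iff_of_eq_none (hval i) hprio hν hνi).mpr
      ⟨s, hs, fun h => hnot (hfull s i h)⟩
  · simp only [mem_sdiff, mem_filter, mem_univ, true_and, not_not] at hi ⊢
    obtain ⟨u, hu⟩ := Option.ne_none_iff_exists'.mp hi.1
    have huP := (hk i).subset ((GS_isStable hvalk hprio).1.mem_acceptables (hvalk i) hu)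
    exact ⟨(blockingStudent_iff_of_eq_none (hval i) hprio hν hi.2).mpr
      ⟨u, huP, fun h => lt_irrefl _ ((hfull u i h).2 i hu)⟩, fun h => hi.1 (hunmatched i h)⟩
  · rw [Finset.card_filter_ne_none, Finset.card_filter_ne_none]
    exact sum_le_sum fun s _ => card_GS_le_of_isPrefix hvall hvalk hprio hlk

theorem numBlocking_GSk_le (hval : ∀ i, ValidPref (P i)) (hprio : ∀ s, ValidPrio (prio s))
    {k l : ℕ} (hlk : l ≤ k) :
    numBlocking P prio q (GSk k P prio q) ≤ numBlocking P prio q (GSk l P prio q) :=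
  numBlocking_GS_le_of_isPrefix hval (fun i => (hval i).truncate k)
    (fun i => (hval i).truncate l) hprio
    (fun i => acceptables_truncate (P i) k ▸ List.take_prefix _ _)
    (fun i => by simpa only [acceptables_truncate] using List.take_prefix_take_left hlk)

end Fairness

section SingleSeat

variable {I S : Type*} [Fintype I] [DecidableEq I] [Fintype S] [DecidableEq S]
  {P : I → List (Option S)} {prio : S → List I} {q : S → ℕ} {i x : I} {s a : S} {m : ℕ}
  (hval : ∀ i, ValidPref (P i)) (hprio : ∀ s, ValidPrio (prio s))
  (hempty : ∀ i ≠ x, acceptables (P i) = []) (hqa : 0 < q a) (hq : ∀ s ≠ a, q s = 0)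
include hval hprio hempty hq

theorem eq_some_of_GSk_eq_some (h : GSk m P prio q i = some s) :
    i = x ∧ s = a ∧ a ∈ (acceptables (P x)).take m := by
  have hs := (GS_isStable (fun i => (hval i).truncate m) hprio).1.mem_acceptables
    (P := fun i => truncate (P i) m) ((hval i).truncate m) h
  rw [acceptables_truncate] at hs
  have hix : i = x := by
    by_contra hix
    simp [hempty i hix] at hs
  obtain rfl : s = a := by
    by_contra hsa
    exact (GS_isMatching (fun i => (hval i).truncate m) hprio).pos_of_eq_some h |>.ne' (hq s hsa)
  exact ⟨hix, rfl, hix ▸ hs⟩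

theorem GSk_eq_none_of_not_mem_take (ha : a ∉ (acceptables (P x)).take m) (i : I) :
    GSk m P prio q i = none := by
  rcases h : GSk m P prio q i with _ | s
  · rfl
  · exact absurd (eq_some_of_GSk_eq_some hval hprio hempty hq h).2.2 ha

include hqa in
theorem GSk_eq_some_of_mem_take (ha : a ∈ (acceptables (P x)).take m) :
    GSk m P prio q x = some a := by
  rcases h : GSk m P prio q x with _ | s
  · have hfull := (GS_isStable (fun i => (hval i).truncate m) hprio).card_eq_of_eq_none
      (P := fun i => truncate (P i) m) ((hval x).truncate m)
      (GS_isMatching (fun i => (hval i).truncate m) hprio) h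
      (by rwa [acceptables_truncate])
    obtain ⟨j, hj⟩ := card_pos.mp (hfull.trans_gt hqa)
    have hj := (mem_filter.mp hj).2
    obtain ⟨rfl, -⟩ := eq_some_of_GSk_eq_some hval hprio hempty hq hj
    exact absurd (hj.symm.trans h) (Option.some_ne_none a)
  · rw [(eq_some_of_GSk_eq_some hval hprio hempty hq h).2.1]

include hqa in
theorem numBlocking_GSk_eq_zero_of_mem_take (ha : a ∈ (acceptables (P x)).take m) :
    numBlocking P prio q (GSk m P prio q) = 0 := by
  have hx := GSk_eq_some_of_mem_take hval hprio hempty hqa hq ha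
  refine numBlocking_eq_zero_iff.mpr fun i ⟨s, hblock⟩ => ?_
  by_cases hix : i = x
  · subst hix
    by_cases hsa : s = a
    · exact lt_irrefl _ (hsa ▸ hx ▸ hblock.1)
    · exact (GS_isMatching (fun i => (hval i).truncate m) hprio).not_blocks_of_eq_zero
        (hq s hsa) hblock
  · have hi : GSk m P prio q i = none := by
      rcases h : GSk m P prio q i with _ | t
      · rfl
      · exact absurd (eq_some_of_GSk_eq_some hval hprio hempty hq h).1 hix
    have hpref := hblock.1
    rw [hi, (hval i).prefLt_some_none_iff, hempty i hix] at hpref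
    exact List.not_mem_nil hpref

include hqa in
theorem numBlocking_GSk_pos_of_not_mem_take (ha : a ∈ acceptables (P x))
    (ha' : a ∉ (acceptables (P x)).take m) : 0 < numBlocking P prio q (GSk m P prio q) := by
  have hnone := GSk_eq_none_of_not_mem_take hval hprio hempty hq ha'
  refine numBlocking_pos_iff.mpr ⟨x, a, ?_, Or.inl ?_⟩
  · rwa [hnone, (hval x).prefLt_some_none_iff]
  · simpa [hnone] using hqa

end SingleSeat

section Example

variable {I S : Type*} [Fintype I] [DecidableEq I] [Fintype S] [DecidableEq S]

theorem exists_numBlocking_GSk_lt [Nonempty I] {k l : ℕ} (hlk : l < k)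
    (hlS : l < Fintype.card S) :
    ∃ (P : I → List (Option S)) (prio : S → List I) (q : S → ℕ),
      (∀ i, ValidPref (P i)) ∧ (∀ s, ValidPrio (prio s)) ∧
      numBlocking P prio q (GSk k P prio q) < numBlocking P prio q (GSk l P prio q) := by
  obtain ⟨x⟩ := ‹Nonempty I›
  set schools : List S := (univ : Finset S).toList
  have hnodup : schools.Nodup := nodup_toList _
  have hlen : l < schools.length := by rwa [length_toList, card_univ]
  set a := schools[l]
  let L : I → List S := fun i => if i = x then schools else []
  let R : I → List S := fun i => if i = x then [] else schools
  have hLR : ∀ i, L i ++ R i = schools := fun i => by by_cases i = x <;> simp [L, R, *]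
  let P : I → List (Option S) := fun i => (L i).map some ++ none :: (R i).map some
  let prio : S → List I := fun _ => (univ : Finset I).toList
  let q : S → ℕ := fun s => if s = a then 1 else 0
  have hval : ∀ i, ValidPref (P i) := fun i => validPref_map_some_append
    (by rw [hLR]; exact hnodup) (by rw [hLR]; exact fun s => mem_toList.mpr (mem_univ s))
  have hprio : ∀ s, ValidPrio (prio s) := fun _ => ⟨nodup_toList _, fun i => by simp [prio]⟩
  have hacc : ∀ i, acceptables (P i) = L i := fun i => acceptables_map_some_append _ _
  have hempty : ∀ i ≠ x, acceptables (P i) = [] := fun i hi => by simp [hacc, L, hi]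
  have hq : ∀ s ≠ a, q s = 0 := fun s hs => by simp [q, hs]
  have hqa : 0 < q a := by simp [q]
  have haccx : acceptables (P x) = schools := by simp [hacc, L]
  have hmem : ∀ m, a ∈ schools.take m ↔ l < m := fun m => by
    rw [List.mem_take_iff_getElem]
    constructor
    · rintro ⟨n, hn, hna⟩
      rw [hnodup.getElem_inj_iff] at hna
      omega
    · exact fun h => ⟨l, by omega, rfl⟩
  refine ⟨P, prio, q, hval, hprio, ?_⟩
  rw [numBlocking_GSk_eq_zero_of_mem_take hval hprio hempty hqa hq (haccx ▸ (hmem k).mpr hlk)]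
  exact numBlocking_GSk_pos_of_not_mem_take hval hprio hempty hqa hq
    (haccx ▸ List.getElem_mem hlen) (haccx ▸ fun h => lt_irrefl l ((hmem l).mp h))

end Example

theorem gsk_more_fair_by_counting_than_gsl_general
    {I S : Type*} [Fintype I] [DecidableEq I] [Fintype S] [DecidableEq S]
    (hIS : Fintype.card S < Fintype.card I)
    (k l : ℕ) (hlk : l < k) (hkS : k < Fintype.card S) :
    (∀ (P : I → List (Option S)) (prio : S → List I) (q : S → ℕ),
        (∀ i, ValidPref (P i)) → (∀ s, ValidPrio (prio s)) →
        numBlocking P prio q (GSk k P prio q) ≤ numBlocking P prio q (GSk l P prio q)) ∧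
    (∃ (P : I → List (Option S)) (prio : S → List I) (q : S → ℕ),
        (∀ i, ValidPref (P i)) ∧ (∀ s, ValidPrio (prio s)) ∧
        numBlocking P prio q (GSk k P prio q) < numBlocking P prio q (GSk l P prio q)) := by
  have : Nonempty I := Fintype.card_pos_iff.mp (by omega)
  exact ⟨fun P prio q hval hprio => numBlocking_GSk_le hval hprio hlk.le,
    exists_numBlocking_GSk_lt hlk (hlk.trans hkS)⟩

/-- Theorem 3: with at least two schools and `|S| > k > ℓ ≥ 1`, the
constrained Gale–Shapley mechanism `GS^k` is more fair by counting (the blocking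
students) than `GS^ℓ`. -/
theorem gsk_more_fair_by_counting_than_gsl
    {I S : Type*} [Fintype I] [DecidableEq I] [Fintype S] [DecidableEq S]
    (hIS : Fintype.card S < Fintype.card I) (hS : 2 ≤ Fintype.card S)
    (k l : ℕ) (hl : 1 ≤ l) (hlk : l < k) (hkS : k < Fintype.card S) :
    (∀ (P : I → List (Option S)) (prio : S → List I) (q : S → ℕ),
        (∀ i, ValidPref (P i)) → (∀ s, ValidPrio (prio s)) →
        numBlocking P prio q (GSk k P prio q) ≤ numBlocking P prio q (GSk l P prio q)) ∧
    (∃ (P : I → List (Option S)) (prio : S → List I) (q : S → ℕ),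
        (∀ i, ValidPref (P i)) ∧ (∀ s, ValidPrio (prio s)) ∧
        numBlocking P prio q (GSk k P prio q) < numBlocking P prio q (GSk l P prio q)) :=
  gsk_more_fair_by_counting_than_gsl_general hIS k l hlk hkS

end SchoolChoice
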